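/- arXiv:1806.02647 — 2 statements merged into one kernel-verified Lean document; each statement's English description precedes it below -/
import Mathlib

section
/- Let 0 < ε_1 < … < ε_m be tolerances, let w_1, …, w_m ≥ 0 be real weights, and let c_w be the weighted cost values. For every k with 2 ≤ k ≤ m and every shortcut (i,j) (with i < j) that is valid for ε_{k−1}, it holds that c_w(k,(i,j)) = c_w(k−1,(i,j)) + w_k. -/
/-!
A shortcut `(i, j)` valid for `ε (k - 1)` is itself a cheapest `ε (k - 1)`-path from `i` to `j`
for the costs `cw (k - 1)`, so the minimum in the recursion for `cw k i j` is `cw (k - 1) i j`.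
Indeed, write `cw (k - 1) = w (k - 1) + M` with `M` the minimal level-`(k - 2)` cost (`M = 0`
at level one). Costs are nonnegative at every level, and consecutive shortcuts give a path
between any two indices, so `M` satisfies the triangle inequality. Along a path
`i = x₀ < x₁ < ⋯ < xᵣ = j` we therefore get
`cw (k - 1) i j = w (k - 1) + M i j ≤ w (k - 1) + ∑ M xₛ xₛ₊₁ ≤ ∑ cw (k - 1) xₛ xₛ₊₁`,
where the last step needs `r ≥ 1` and `w (k - 1) ≥ 0`.
-/

open Metric

noncomputable section

/-- The Euclidean plane. -/
abbrev Pt : Type := EuclideanSpace ℝ (Fin 2)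

/-- The subcurve `⟨p i, …, p j⟩`: the union of the segments between consecutive vertices. -/
def subcurve {n : ℕ} (p : Fin n → Pt) (i j : Fin n) : Set Pt :=
  ⋃ (t : Fin n) (_ : i ≤ t ∧ t < j) (h : (t : ℕ) + 1 < n),
    segment ℝ (p t) (p ⟨(t : ℕ) + 1, h⟩)

/-- The (Hausdorff-distance) error of the shortcut `(i, j)`. -/
def err {n : ℕ} (p : Fin n → Pt) (i j : Fin n) : ℝ :=
  Metric.hausdorffDist (segment ℝ (p i) (p j)) (subcurve p i j)

/-- The edges (consecutive pairs) of a path given as a list of vertices. -/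
def edges {n : ℕ} (l : List (Fin n)) : List (Fin n × Fin n) := l.zip l.tail

/-- `l` is a path from `i` to `j` at tolerance `ε`: a strictly increasing sequence of
indices starting at `i`, ending at `j`, all of whose edges are valid shortcuts for `ε`. -/
def IsPath {n : ℕ} (p : Fin n → Pt) (ε : ℝ) (i j : Fin n) (l : List (Fin n)) : Prop :=
  l.Chain' (· < ·) ∧ l.head? = some i ∧ l.getLast? = some j ∧
    ∀ e ∈ edges l, err p e.1 e.2 ≤ ε

/-- The cost of a path: the sum of the costs of its edges. -/
def pathCost {n : ℕ} {α : Type*} [AddCommMonoid α] (c : Fin n → Fin n → α)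
    (l : List (Fin n)) : α :=
  ((edges l).map (fun e => c e.1 e.2)).sum

/-- Minimum cost (natural-valued) of a path from `i` to `j` at tolerance `ε`. -/
def minCost {n : ℕ} (p : Fin n → Pt) (ε : ℝ) (c : Fin n → Fin n → ℕ) (i j : Fin n) : ℕ :=
  sInf {s : ℕ | ∃ l, IsPath p ε i j l ∧ pathCost c l = s}

/-- Minimum cost (real-valued) of a path from `i` to `j` at tolerance `ε`. -/
def minCostR {n : ℕ} (p : Fin n → Pt) (ε : ℝ) (c : Fin n → Fin n → ℝ) (i j : Fin n) : ℝ :=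
  sInf {s : ℝ | ∃ l, IsPath p ε i j l ∧ pathCost c l = s}

@[simp] lemma edges_singleton {n : ℕ} (a : Fin n) : edges [a] = [] := rfl

@[simp] lemma edges_cons_cons {n : ℕ} (a b : Fin n) (l : List (Fin n)) :
    edges (a :: b :: l) = (a, b) :: edges (b :: l) := rfl

@[simp] lemma pathCost_singleton {n : ℕ} (c : Fin n → Fin n → ℝ) (a : Fin n) :
    pathCost c [a] = 0 := rfl

@[simp] lemma pathCost_cons_cons {n : ℕ} (c : Fin n → Fin n → ℝ) (a b : Fin n)
    (l : List (Fin n)) :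
    pathCost c (a :: b :: l) = c a b + pathCost c (b :: l) := rfl

namespace IsPath

variable {n : ℕ} {p : Fin n → Pt} {ε : ℝ} {i j a b : Fin n} {l : List (Fin n)}

lemma iff_isChain : IsPath p ε i j l ↔ l.IsChain (· < ·) ∧ l.head? = some i ∧
    l.getLast? = some j ∧ ∀ e ∈ edges l, err p e.1 e.2 ≤ ε := Iff.rfl

lemma not_nil : ¬ IsPath p ε i j [] := by simp [iff_isChain]

@[simp] lemma singleton_iff : IsPath p ε i j [a] ↔ a = i ∧ a = j := by
  simp [iff_isChain, eq_comm]

@[simp] lemma cons_cons_iff :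
    IsPath p ε i j (a :: b :: l) ↔
      a = i ∧ a < b ∧ err p a b ≤ ε ∧ IsPath p ε b j (b :: l) := by
  simp [iff_isChain, List.getLast?_cons_cons]
  tauto

lemma head_eq : IsPath p ε i j (a :: l) → a = i := fun h => by simpa using h.2.1

lemma le : ∀ {i : Fin n} {l : List (Fin n)}, IsPath p ε i j l → i ≤ j
  | _, [], h => absurd h not_nil
  | _, [_], h => by obtain ⟨rfl, rfl⟩ := singleton_iff.1 h; rfl
  | _, _ :: _ :: _, h => by
    obtain ⟨rfl, hab, -, h⟩ := cons_cons_iff.1 h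
    exact hab.le.trans h.le

lemma append (c : Fin n → Fin n → ℝ) :
    ∀ {a : Fin n} {l₁ l₂ : List (Fin n)}, IsPath p ε a b l₁ → IsPath p ε b j l₂ →
      ∃ l, IsPath p ε a j l ∧ pathCost c l = pathCost c l₁ + pathCost c l₂
  | _, [], _, h, _ => absurd h not_nil
  | _, [_], l₂, h₁, h₂ => by
    obtain ⟨rfl, rfl⟩ := singleton_iff.1 h₁
    exact ⟨l₂, h₂, by simp⟩
  | _, _ :: x :: t, l₂, h₁, h₂ => by
    obtain ⟨rfl, hax, herr, h₁⟩ := cons_cons_iff.1 h₁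
    obtain ⟨_ | ⟨y, l⟩, hl, hcost⟩ := append c h₁ h₂
    · exact absurd hl not_nil
    obtain rfl := head_eq hl
    refine ⟨_ :: y :: l, cons_cons_iff.2 ⟨rfl, hax, herr, hl⟩, ?_⟩
    simp only [pathCost_cons_cons] at hcost ⊢
    rw [hcost, add_assoc]

lemma pathCost_mono {c c' : Fin n → Fin n → ℝ}
    (hcc' : ∀ a b, a < b → err p a b ≤ ε → c a b ≤ c' a b) :
    ∀ {i : Fin n} {l : List (Fin n)}, IsPath p ε i j l → pathCost c l ≤ pathCost c' l
  | _, [], h => absurd h not_nil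
  | _, [_], _ => le_rfl
  | _, _ :: _ :: _, h => by
    obtain ⟨rfl, hab, herr, h⟩ := cons_cons_iff.1 h
    simpa only [pathCost_cons_cons] using add_le_add (hcc' _ _ hab herr) (pathCost_mono hcc' h)

lemma pathCost_nonneg {c : Fin n → Fin n → ℝ} (hc : ∀ a b, a < b → err p a b ≤ ε → 0 ≤ c a b)
    (h : IsPath p ε i j l) : 0 ≤ pathCost c l := by
  simpa [pathCost] using pathCost_mono (c := 0) hc h

end IsPath

lemma err_succ {n : ℕ} (p : Fin n → Pt) (t : Fin n) (h : (t : ℕ) + 1 < n) :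
    err p t ⟨t + 1, h⟩ = 0 := by
  suffices subcurve p t ⟨t + 1, h⟩ = segment ℝ (p t) (p ⟨t + 1, h⟩) by
    rw [err, this, hausdorffDist_self_zero]
  ext x
  simp only [subcurve, Set.mem_iUnion, Fin.le_def, Fin.lt_def]
  constructor
  · rintro ⟨s, ⟨hts, hst⟩, _, hx⟩
    obtain rfl : s = t := Fin.ext (by omega)
    exact hx
  · exact fun hx => ⟨t, ⟨le_rfl, Nat.lt_succ_self _⟩, h, hx⟩

lemma exists_isPath {n : ℕ} (p : Fin n → Pt) {ε : ℝ} (hε : 0 ≤ ε) {i j : Fin n} (hij : i ≤ j) :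
    ∃ l, IsPath p ε i j l := by
  obtain ⟨d, hd⟩ := Nat.exists_eq_add_of_le (Fin.le_def.1 hij)
  induction d generalizing i with
  | zero => exact ⟨[i], by simp [Fin.ext hd.symm]⟩
  | succ d ih =>
    have hi : (i : ℕ) + 1 < n := by omega
    obtain ⟨l, hl⟩ := ih (i := ⟨i + 1, hi⟩) (Fin.le_def.2 (by simp; omega)) (by simp; omega)
    obtain ⟨l, rfl⟩ : ∃ t, l = ⟨i + 1, hi⟩ :: t := by
      cases l with
      | nil => exact absurd hl IsPath.not_nil
      | cons a t => exact ⟨t, by rw [IsPath.head_eq hl]⟩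
    exact ⟨i :: _ :: l, IsPath.cons_cons_iff.2
      ⟨rfl, Fin.lt_def.2 (Nat.lt_succ_self _), (err_succ p i hi).le.trans hε, hl⟩⟩

section minCostR

variable {n : ℕ} {p : Fin n → Pt} {ε : ℝ} {c : Fin n → Fin n → ℝ} {i j : Fin n}

lemma minCostR_le (hc : ∀ a b, a < b → err p a b ≤ ε → 0 ≤ c a b) {l : List (Fin n)}
    (hl : IsPath p ε i j l) : minCostR p ε c i j ≤ pathCost c l :=
  csInf_le ⟨0, by rintro _ ⟨l, hl, rfl⟩; exact hl.pathCost_nonneg hc⟩ ⟨l, hl, rfl⟩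

lemma minCostR_nonneg (hc : ∀ a b, a < b → err p a b ≤ ε → 0 ≤ c a b) :
    0 ≤ minCostR p ε c i j :=
  Real.sInf_nonneg <| by rintro _ ⟨l, hl, rfl⟩; exact hl.pathCost_nonneg hc

lemma le_minCostR (hε : 0 ≤ ε) (hij : i ≤ j) {x : ℝ}
    (h : ∀ l, IsPath p ε i j l → x ≤ pathCost c l) : x ≤ minCostR p ε c i j := by
  obtain ⟨l, hl⟩ := exists_isPath p hε hij
  exact le_csInf ⟨_, l, hl, rfl⟩ (by rintro _ ⟨l, hl, rfl⟩; exact h l hl)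

lemma minCostR_le_add (hε : 0 ≤ ε) (hc : ∀ a b, a < b → err p a b ≤ ε → 0 ≤ c a b)
    {a b d : Fin n} (hab : a ≤ b) (hbd : b ≤ d) :
    minCostR p ε c a d ≤ minCostR p ε c a b + minCostR p ε c b d := by
  have h : ∀ l₂, IsPath p ε b d l₂ →
      minCostR p ε c a d - pathCost c l₂ ≤ minCostR p ε c a b := fun l₂ h₂ =>
    le_minCostR hε hab fun l₁ h₁ => by
      obtain ⟨l, hl, hcost⟩ := h₁.append c h₂
      linarith [minCostR_le hc hl]
  linarith [le_minCostR hε hbd fun l₂ h₂ => (by linarith [h l₂ h₂] :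
    minCostR p ε c a d - minCostR p ε c a b ≤ pathCost c l₂)]

lemma minCostR_le_pathCost_minCostR (hε : 0 ≤ ε) (hc : ∀ a b, a < b → err p a b ≤ ε → 0 ≤ c a b)
    {ε' : ℝ} : ∀ {i : Fin n} {l : List (Fin n)}, IsPath p ε' i j l →
      minCostR p ε c i j ≤ pathCost (minCostR p ε c) l
  | _, [], h => absurd h IsPath.not_nil
  | _, [a], h => by
    obtain ⟨rfl, rfl⟩ := IsPath.singleton_iff.1 h
    simpa using minCostR_le hc (IsPath.singleton_iff.2 ⟨rfl, rfl⟩ : IsPath p ε a a [a])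
  | _, _ :: _ :: _, h => by
    obtain ⟨rfl, hab, -, h⟩ := IsPath.cons_cons_iff.1 h
    rw [pathCost_cons_cons]
    linarith [minCostR_le_add hε hc hab.le h.le, minCostR_le_pathCost_minCostR hε hc h]

lemma minCostR_eq_of_forall_le_pathCost (hij : i < j) (herr : err p i j ≤ ε)
    (h : ∀ l, IsPath p ε i j l → c i j ≤ pathCost c l) : minCostR p ε c i j = c i j :=
  IsLeast.csInf_eq ⟨⟨[i, j], IsPath.cons_cons_iff.2 ⟨rfl, hij, herr, by simp⟩, by simp⟩,
    by rintro _ ⟨l, hl, rfl⟩; exact h l hl⟩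

end minCostR

lemma le_pathCost_of_eq_add {n : ℕ} {p : Fin n → Pt} {ε w : ℝ} {c f : Fin n → Fin n → ℝ}
    (hw : 0 ≤ w) (hc : ∀ a b, a < b → err p a b ≤ ε → c a b = w + f a b)
    {i j : Fin n} (hij : i < j) (herr : err p i j ≤ ε) {l : List (Fin n)} (hl : IsPath p ε i j l)
    (hfl : f i j ≤ pathCost f l) : c i j ≤ pathCost c l := by
  rcases l with _ | ⟨a, _ | ⟨x, t⟩⟩
  · exact absurd hl IsPath.not_nil
  · obtain ⟨rfl, rfl⟩ := IsPath.singleton_iff.1 hl; exact absurd hij (lt_irrefl _)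
  · obtain ⟨rfl, hix, hixerr, hl⟩ := IsPath.cons_cons_iff.1 hl
    have hft : pathCost f (x :: t) ≤ pathCost c (x :: t) :=
      hl.pathCost_mono fun a b hab habe => by rw [hc a b hab habe]; linarith
    rw [pathCost_cons_cons] at hfl ⊢
    rw [hc _ _ hij herr, hc _ _ hix hixerr]
    linarith

section WeightedCost

variable {n m : ℕ} {p : Fin n → Pt} {ε w : ℕ → ℝ} {cw : ℕ → Fin n → Fin n → ℝ}

lemma weightedCost_nonneg (hw : ∀ k, 1 ≤ k → k ≤ m → 0 ≤ w k)
    (hc1 : ∀ i j : Fin n, i < j → err p i j ≤ ε 1 → cw 1 i j = w 1)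
    (hck : ∀ k, 2 ≤ k → k ≤ m → ∀ i j : Fin n, i < j → err p i j ≤ ε k →
      cw k i j = w k + minCostR p (ε (k - 1)) (cw (k - 1)) i j)
    {k : ℕ} (hk : 1 ≤ k) (hkm : k ≤ m) : ∀ a b, a < b → err p a b ≤ ε k → 0 ≤ cw k a b := by
  induction k, hk using Nat.le_induction with
  | base => intro a b hab herr; rw [hc1 a b hab herr]; exact hw 1 le_rfl hkm
  | succ k hk ih =>
    intro a b hab herr
    rw [hck (k + 1) (by omega) hkm a b hab herr, Nat.add_sub_cancel]
    exact add_nonneg (hw _ (by omega) hkm) (minCostR_nonneg (ih (by omega)))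

lemma weightedCost_le_pathCost (hε : ∀ k, 1 ≤ k → k ≤ m → 0 ≤ ε k)
    (hw : ∀ k, 1 ≤ k → k ≤ m → 0 ≤ w k)
    (hc1 : ∀ i j : Fin n, i < j → err p i j ≤ ε 1 → cw 1 i j = w 1)
    (hck : ∀ k, 2 ≤ k → k ≤ m → ∀ i j : Fin n, i < j → err p i j ≤ ε k →
      cw k i j = w k + minCostR p (ε (k - 1)) (cw (k - 1)) i j)
    {k : ℕ} (hk : 1 ≤ k) (hkm : k ≤ m) {i j : Fin n} (hij : i < j) (herr : err p i j ≤ ε k)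
    {l : List (Fin n)} (hl : IsPath p (ε k) i j l) : cw k i j ≤ pathCost (cw k) l := by
  obtain rfl | hk2 := hk.eq_or_lt
  · refine le_pathCost_of_eq_add (hw 1 le_rfl hkm) (f := 0)
      (fun a b hab habe => by simpa using hc1 a b hab habe) hij herr hl ?_
    simp [pathCost]
  · have hnonneg := weightedCost_nonneg hw hc1 hck (k := k - 1) (by omega) (by omega)
    exact le_pathCost_of_eq_add (hw k hk hkm) (hck k hk2 hkm) hij herr hl
      (minCostR_le_pathCost_minCostR (hε _ (by omega) (by omega)) hnonneg hl)

end WeightedCost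

theorem weighted_cost_increment_general {n m : ℕ} (p : Fin n → Pt)
    (ε : ℕ → ℝ) (hε1 : 0 < ε 1)
    (hεmono : ∀ k, 1 ≤ k → k < m → ε k < ε (k + 1))
    (w : ℕ → ℝ) (hw : ∀ k, 1 ≤ k → k ≤ m → 0 ≤ w k)
    (cw : ℕ → Fin n → Fin n → ℝ)
    (hc1 : ∀ i j : Fin n, i < j → err p i j ≤ ε 1 → cw 1 i j = w 1)
    (hck : ∀ k, 2 ≤ k → k ≤ m → ∀ i j : Fin n, i < j → err p i j ≤ ε k →
      cw k i j = w k + minCostR p (ε (k - 1)) (cw (k - 1)) i j) :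
    ∀ k, 2 ≤ k → k ≤ m → ∀ i j : Fin n, i < j → err p i j ≤ ε (k - 1) →
      cw k i j = cw (k - 1) i j + w k := by
  intro k hk2 hkm i j hij herr
  have hε : ∀ k, 1 ≤ k → k ≤ m → 0 < ε k := by
    intro k hk
    induction k, hk using Nat.le_induction with
    | base => exact fun _ => hε1
    | succ k hk ih => exact fun hkm => (ih (by omega)).trans (hεmono k hk (by omega))
  have hεk : ε (k - 1) < ε k := by
    simpa [Nat.sub_add_cancel (by omega : 1 ≤ k)] using hεmono (k - 1) (by omega) (by omega)
  rw [hck k hk2 hkm i j hij (herr.trans hεk.le), add_comm,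
    minCostR_eq_of_forall_le_pathCost hij herr fun l hl =>
      weightedCost_le_pathCost (fun k hk hkm => (hε k hk hkm).le) hw hc1 hck (by omega) (by omega)
        hij herr hl]

/-- For `2 ≤ k ≤ m` and any shortcut `(i, j)` valid for `ε (k-1)`,
the weighted DP cost values satisfy `c_w k (i,j) = c_w (k-1) (i,j) + w k`. -/
theorem weighted_cost_increment {n m : ℕ} (hn : 2 ≤ n) (hm : 1 ≤ m) (p : Fin n → Pt)
    (ε : ℕ → ℝ) (hε1 : 0 < ε 1)
    (hεmono : ∀ k, 1 ≤ k → k < m → ε k < ε (k + 1))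
    (w : ℕ → ℝ) (hw : ∀ k, 1 ≤ k → k ≤ m → 0 ≤ w k)
    (cw : ℕ → Fin n → Fin n → ℝ)
    (hc1 : ∀ i j : Fin n, i < j → err p i j ≤ ε 1 → cw 1 i j = w 1)
    (hck : ∀ k, 2 ≤ k → k ≤ m → ∀ i j : Fin n, i < j → err p i j ≤ ε k →
      cw k i j = w k + minCostR p (ε (k - 1)) (cw (k - 1)) i j) :
    ∀ k, 2 ≤ k → k ≤ m → ∀ i j : Fin n, i < j → err p i j ≤ ε (k - 1) →
      cw k i j = cw (k - 1) i j + w k :=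
  weighted_cost_increment_general p ε hε1 hεmono w hw cw hc1 hck
end
end

section
/- For every continuous progressive simplification S there exists a continuous progressive simplification T such that T is constant on each interval [e_k, e_{k+1}) for k = 1, …, r, and ∫_0^{ε_M} |T(ε)| dε ≤ ∫_0^{ε_M} |S(ε)| dε. In particular, a minimal continuous progressive simplification can be chosen constant between consecutive shortcut error values. -/
open Metric

noncomputable section

/-- `l` is a minimum-cost path from `i` to `j` at tolerance `ε` w.r.t. cost `c`. -/
def IsMinPath {n : ℕ} (p : Fin n → Pt) (ε : ℝ) (c : Fin n → Fin n → ℕ) (i j : Fin n)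
    (l : List (Fin n)) : Prop :=
  IsPath p ε i j l ∧ ∀ l', IsPath p ε i j l' → pathCost c l ≤ pathCost c l'

/-- `L'` is obtained from `L` by replacing each edge `(i, j)` of `L` by a minimum-cost
path from `i` to `j` at tolerance `ε`, and concatenating. -/
def Refines {n : ℕ} (p : Fin n → Pt) (ε : ℝ) (c : Fin n → Fin n → ℕ)
    (L L' : List (Fin n)) : Prop :=
  ∃ f : Fin n × Fin n → List (Fin n),
    (∀ e ∈ edges L, IsMinPath p ε c e.1 e.2 (f e)) ∧
    L' = L.take 1 ++ ((edges L).map (fun e => (f e).tail)).flatten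

/-- `S 1, …, S m` is a progressive simplification for the tolerances `ε 1 < … < ε m`:
each `S k` is an `ε k`-simplification (a path from `v0` to `v1`), and every vertex of
`S (k+1)` is a vertex of `S k`. -/
def ProgSimp {n : ℕ} (p : Fin n → Pt) (m : ℕ) (ε : ℕ → ℝ) (v0 v1 : Fin n)
    (S : ℕ → List (Fin n)) : Prop :=
  (∀ k, 1 ≤ k → k ≤ m → IsPath p (ε k) v0 v1 (S k)) ∧
  (∀ k, 1 ≤ k → k < m → ∀ v ∈ S (k + 1), v ∈ S k)

/-- A continuous progressive simplification on `[0, εM)`: `S ε` is an `ε`-simplification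
for every `0 ≤ ε < εM`, and every vertex of `S ε'` is a vertex of `S ε` whenever
`ε ≤ ε'`. -/
def ContProgSimp {n : ℕ} (p : Fin n → Pt) (εM : ℝ) (v0 v1 : Fin n)
    (S : ℝ → List (Fin n)) : Prop :=
  (∀ x : ℝ, 0 ≤ x → x < εM → IsPath p x v0 v1 (S x)) ∧
  (∀ x x' : ℝ, 0 ≤ x → x ≤ x' → x' < εM → ∀ v ∈ S x', v ∈ S x)

/-!
No shortcut error lies strictly between two consecutive error values, so an edge valid at some
tolerance of a step `[e k, e (k+1))` is valid at every tolerance of that step. Hence `S` may be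
replaced on each step by the constant `S (y k)`, where `y k` minimises `|S|` over the step: the
result is still an ε-simplification for every ε, it is nested because `y k` increases with `k`,
and its size is pointwise at most that of `S`, which gives the inequality of integrals.
-/

open Set MeasureTheory

section Paths

variable {n : ℕ} {p : Fin n → Pt} {x y : ℝ} {i j : Fin n} {l : List (Fin n)}

theorem rel_of_mem_edges {R : Fin n → Fin n → Prop} :
    ∀ {l : List (Fin n)}, l.IsChain R → ∀ d ∈ edges l, R d.1 d.2
  | [], _, _, hd | [_], _, _, hd => by simp [edges] at hd
  | a :: b :: t, h, d, hd => by
    rw [List.isChain_cons_cons] at h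
    obtain rfl | hd := List.mem_cons.mp (show d ∈ (a, b) :: edges (b :: t) from hd)
    · exact h.1
    · exact rel_of_mem_edges h.2 d hd

theorem IsPath.nodup (h : IsPath p x i j l) : l.Nodup :=
  (List.isChain_iff_pairwise.mp h.1).imp ne_of_lt

theorem IsPath.of_err_le (h : IsPath p y i j l)
    (hyx : ∀ a b : Fin n, a < b → err p a b ≤ y → err p a b ≤ x) : IsPath p x i j l :=
  ⟨h.1, h.2.1, h.2.2.1, fun d hd => hyx d.1 d.2 (rel_of_mem_edges h.1 d hd) (h.2.2.2 d hd)⟩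

theorem subcurve_eq_segment_of_succ (hij : (j : ℕ) = i + 1) :
    subcurve p i j = segment ℝ (p i) (p j) := by
  ext z
  simp only [subcurve, mem_iUnion]
  constructor
  · rintro ⟨t, ⟨hit, htj⟩, ht, hz⟩
    rw [Fin.le_def] at hit
    rw [Fin.lt_def] at htj
    obtain rfl : t = i := Fin.ext (by omega)
    convert hz using 3
    exact Fin.ext hij
  · intro hz
    refine ⟨i, ⟨le_rfl, by simp [Fin.lt_def, hij]⟩, by omega, ?_⟩
    convert hz using 3
    exact Fin.ext hij.symm

theorem err_eq_zero_of_succ (hij : (j : ℕ) = i + 1) : err p i j = 0 := by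
  rw [err, subcurve_eq_segment_of_succ hij, hausdorffDist_self_zero]

end Paths

section ContProgSimp

variable {n : ℕ} {p : Fin n → Pt} {εM : ℝ} {v0 v1 : Fin n} {S : ℝ → List (Fin n)}

theorem ContProgSimp.length_antitoneOn (hS : ContProgSimp p εM v0 v1 S) :
    AntitoneOn (fun x => (S x).length) (Ico 0 εM) := fun x hx x' hx' hxx' =>
  ((hS.1 x' (hx.1.trans hxx') hx'.2).nodup.subperm (hS.2 x x' hx.1 hxx' hx'.2)).length_le

theorem ContProgSimp.comp (hS : ContProgSimp p εM v0 v1 S) {σ : ℝ → ℝ}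
    (hσ_mono : MonotoneOn σ (Ico 0 εM)) (hσ_maps : MapsTo σ (Ico 0 εM) (Ico 0 εM))
    (hσ_err : ∀ x ∈ Ico 0 εM, ∀ a b : Fin n, a < b → err p a b ≤ σ x → err p a b ≤ x) :
    ContProgSimp p εM v0 v1 (S ∘ σ) := by
  refine ⟨fun x hx0 hxM => ?_, fun x x' hx0 hxx' hx'M => ?_⟩
  · have hx : x ∈ Ico 0 εM := ⟨hx0, hxM⟩
    exact (hS.1 _ (hσ_maps hx).1 (hσ_maps hx).2).of_err_le (hσ_err x hx)
  · have hx : x ∈ Ico 0 εM := ⟨hx0, hxx'.trans_lt hx'M⟩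
    have hx' : x' ∈ Ico 0 εM := ⟨hx0.trans hxx', hx'M⟩
    exact hS.2 _ _ (hσ_maps hx).1 (hσ_mono hx hx' hxx') (hσ_maps hx').2

end ContProgSimp

theorem strictMonoOn_Icc_of_lt_add_one {α : Type*} [Preorder α] {e : ℕ → α} {a b : ℕ}
    (he : ∀ k, a ≤ k → k < b → e k < e (k + 1)) : StrictMonoOn e (Icc a b) :=
  strictMonoOn_of_lt_succ ordConnected_Icc fun k _ hk hk1 => by
    simp only [Order.succ_eq_add_one, mem_Icc] at hk hk1
    exact he k hk.1 (by omega)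

section StepIndex

variable (e : ℕ → ℝ) (r : ℕ)

def stepIndex (x : ℝ) : ℕ := Nat.findGreatest (fun k => e k ≤ x) r

theorem stepIndex_le (x : ℝ) : stepIndex e r x ≤ r := Nat.findGreatest_le r

theorem monotone_stepIndex : Monotone (stepIndex e r) := fun _ _ hxy =>
  Nat.findGreatest_mono_left (fun _ hk => hk.trans hxy) r

variable {e r}

theorem le_stepIndex {k : ℕ} (hk : k ≤ r) {x : ℝ} (hx : e k ≤ x) : k ≤ stepIndex e r x :=
  Nat.le_findGreatest hk hx

theorem e_stepIndex_le {k : ℕ} (hk : k ≤ r) {x : ℝ} (hx : e k ≤ x) :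
    e (stepIndex e r x) ≤ x :=
  Nat.findGreatest_spec (P := fun k => e k ≤ x) hk hx

theorem stepIndex_mem_Icc {x : ℝ} (hx : x ∈ Ico (e 1) (e (r + 1))) :
    stepIndex e r x ∈ Icc 1 r := by
  have hr : 1 ≤ r := by
    by_contra! h
    obtain rfl : r = 0 := by omega
    exact lt_irrefl _ (hx.1.trans_lt hx.2)
  exact ⟨le_stepIndex hr hx.1, stepIndex_le e r x⟩

theorem mem_Ico_stepIndex {x : ℝ} (hx : x ∈ Ico (e 1) (e (r + 1))) :
    x ∈ Ico (e (stepIndex e r x)) (e (stepIndex e r x + 1)) := by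
  obtain ⟨hK1, hKr⟩ := stepIndex_mem_Icc hx
  refine ⟨e_stepIndex_le (hK1.trans hKr) hx.1, ?_⟩
  rcases hKr.lt_or_eq with hK | hK
  · by_contra! h
    exact (le_stepIndex hK h).not_gt (Nat.lt_succ_self _)
  · rw [hK]
    exact hx.2

variable (he : StrictMonoOn e (Icc 1 (r + 1)))
include he

theorem stepIndex_eq {k : ℕ} (hk : k ∈ Icc 1 r) {x : ℝ} (hx : x ∈ Ico (e k) (e (k + 1))) :
    stepIndex e r x = k := by
  refine le_antisymm ?_ (le_stepIndex hk.2 hx.1)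
  by_contra! h
  have hKr := stepIndex_le e r x
  have hmono := he.monotoneOn ⟨by omega, by omega⟩ ⟨by omega, by omega⟩ h
  exact (hmono.trans (e_stepIndex_le hk.2 hx.1)).not_gt hx.2

theorem le_e_of_lt_e_succ {k : ℕ} (hk : k ∈ Icc 1 r) {t : ℝ} (ht : ∃ j ∈ Icc 1 r, e j = t)
    (htk : t < e (k + 1)) : t ≤ e k := by
  obtain ⟨j, ⟨hj1, hjr⟩, rfl⟩ := ht
  obtain ⟨hk1, hkr⟩ := hk
  have hjk : j < k + 1 := (he.lt_iff_lt ⟨hj1, by omega⟩ ⟨by omega, by omega⟩).mp htk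
  exact he.monotoneOn ⟨hj1, by omega⟩ ⟨hk1, by omega⟩ (by omega)

variable {y : ℕ → ℝ} (hy : ∀ k ∈ Icc 1 r, y k ∈ Ico (e k) (e (k + 1)))
include hy

theorem monotoneOn_comp_stepIndex : MonotoneOn (y ∘ stepIndex e r) (Ico (e 1) (e (r + 1))) := by
  intro x hx x' hx' hxx'
  obtain ⟨hK1, hKr⟩ := stepIndex_mem_Icc hx
  obtain ⟨hK1', hKr'⟩ := stepIndex_mem_Icc hx'
  rcases (monotone_stepIndex e r hxx').lt_or_eq with hK | hK
  · calc y (stepIndex e r x) ≤ e (stepIndex e r x + 1) := (hy _ ⟨hK1, hKr⟩).2.le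
      _ ≤ e (stepIndex e r x') := he.monotoneOn ⟨by omega, by omega⟩ ⟨hK1', by omega⟩ hK
      _ ≤ y (stepIndex e r x') := (hy _ ⟨hK1', hKr'⟩).1
  · simp only [Function.comp_apply, hK, le_rfl]

theorem mapsTo_comp_stepIndex :
    MapsTo (y ∘ stepIndex e r) (Ico (e 1) (e (r + 1))) (Ico (e 1) (e (r + 1))) := by
  intro x hx
  obtain ⟨hK1, hKr⟩ := stepIndex_mem_Icc hx
  have hyK := hy _ ⟨hK1, hKr⟩
  exact ⟨(he.monotoneOn ⟨le_rfl, by omega⟩ ⟨hK1, by omega⟩ hK1).trans hyK.1,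
    hyK.2.trans_le (he.monotoneOn ⟨by omega, by omega⟩ ⟨by omega, le_rfl⟩ (by omega))⟩

theorem le_of_le_comp_stepIndex {x : ℝ} (hx : x ∈ Ico (e 1) (e (r + 1))) {t : ℝ}
    (ht : ∃ j ∈ Icc 1 r, e j = t) (hty : t ≤ y (stepIndex e r x)) : t ≤ x := by
  have hK := stepIndex_mem_Icc hx
  exact (le_e_of_lt_e_succ he hK ht (hty.trans_lt (hy _ hK).2)).trans (mem_Ico_stepIndex hx).1

end StepIndex

theorem AntitoneOn.intervalIntegrable_of_Ico {f : ℝ → ℝ} {a b c : ℝ} (hab : a ≤ b)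
    (hf : AntitoneOn f (Ico a b)) (hc : ∀ x ∈ Ico a b, c ≤ f x) :
    IntervalIntegrable f volume a b := by
  -- lowering `f b` to `c` makes `f` antitone on `[a, b]` and changes it only on a null set
  have hf' : AntitoneOn (Function.update f b c) (Icc a b) := by
    intro x hx y hy hxy
    have hxb : x ≠ b → x ∈ Ico a b := fun h => ⟨hx.1, hx.2.lt_of_ne h⟩
    rcases eq_or_ne y b with rfl | hyb
    · rcases eq_or_ne x y with rfl | hxy'
      · exact le_rfl
      · simpa [hxy'] using hc x (hxb hxy')
    · have hxy' : x ≠ b := (hxy.trans_lt (hy.2.lt_of_ne hyb)).ne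
      simpa [hyb, hxy'] using hf (hxb hxy') ⟨hy.1, hy.2.lt_of_ne hyb⟩ hxy
  rw [intervalIntegrable_iff_integrableOn_Ico_of_le hab]
  exact ((hf'.integrableOn_isCompact isCompact_Icc).mono_set Ico_subset_Icc_self).congr_fun
    (fun x hx => Function.update_of_ne hx.2.ne _ _) measurableSet_Ico

theorem intervalIntegral_mono_of_antitoneOn_Ico {f g : ℝ → ℝ} {a b : ℝ} (hab : a ≤ b)
    (hf : AntitoneOn f (Ico a b)) (hg : AntitoneOn g (Ico a b)) (hf0 : ∀ x ∈ Ico a b, 0 ≤ f x)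
    (hfg : ∀ x ∈ Ico a b, f x ≤ g x) : ∫ x in a..b, f x ≤ ∫ x in a..b, g x :=
  intervalIntegral.integral_mono_on_of_le_Ioo hab (hf.intervalIntegrable_of_Ico hab hf0)
    (hg.intervalIntegrable_of_Ico hab fun x hx => (hf0 x hx).trans (hfg x hx))
    fun x hx => hfg x (Ioo_subset_Ico_self hx)

theorem first_error_value_eq_zero {n : ℕ} (hn : 2 ≤ n) {p : Fin n → Pt} {εM : ℝ} (hεM : 0 < εM)
    {r : ℕ} {e : ℕ → ℝ} (he : StrictMonoOn e (Icc 1 (r + 1)))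
    (heset : {x : ℝ | (∃ i j : Fin n, i < j ∧ err p i j = x) ∧ x < εM} =
      {x : ℝ | ∃ k, 1 ≤ k ∧ k ≤ r ∧ e k = x}) :
    e 1 = 0 := by
  have hcons : err p ⟨0, by omega⟩ ⟨1, by omega⟩ = 0 := err_eq_zero_of_succ rfl
  obtain ⟨j, hj1, hjr, hj0⟩ : ∃ j, 1 ≤ j ∧ j ≤ r ∧ e j = 0 :=
    heset.subset ⟨⟨_, _, Fin.mk_lt_mk.mpr one_pos, hcons⟩, hεM⟩
  obtain ⟨⟨a, b, -, hab⟩, -⟩ : (∃ a b : Fin n, a < b ∧ err p a b = e 1) ∧ e 1 < εM :=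
    heset.symm.subset ⟨1, le_rfl, hj1.trans hjr, rfl⟩
  refine le_antisymm ?_ (hab ▸ hausdorffDist_nonneg)
  exact hj0 ▸ he.monotoneOn ⟨le_rfl, by omega⟩ ⟨hj1, by omega⟩ hj1

/-- Every continuous progressive simplification can be replaced, without
increasing the integral of its size, by one that is constant on each interval
`[e k, e (k+1))` between consecutive shortcut error values. -/
theorem continuous_progressive_stepwise {n : ℕ} (hn : 2 ≤ n) (p : Fin n → Pt)
    (εM : ℝ)
    (hεMpos : 0 < εM)
    (r : ℕ) (e : ℕ → ℝ)
    (hemono : ∀ k, 1 ≤ k → k ≤ r → e k < e (k + 1))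
    (hetop : e (r + 1) = εM)
    (heset : {x : ℝ | (∃ i j : Fin n, i < j ∧ err p i j = x) ∧ x < εM} =
      {x : ℝ | ∃ k, 1 ≤ k ∧ k ≤ r ∧ e k = x})
    (S : ℝ → List (Fin n))
    (hS : ContProgSimp p εM (⟨0, by omega⟩ : Fin n) (⟨n - 1, by omega⟩ : Fin n) S) :
    ∃ T : ℝ → List (Fin n),
      ContProgSimp p εM (⟨0, by omega⟩ : Fin n) (⟨n - 1, by omega⟩ : Fin n) T ∧
      (∀ k, 1 ≤ k → k ≤ r → ∀ x : ℝ, e k ≤ x → x < e (k + 1) → T x = T (e k)) ∧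
      (∫ x in (0:ℝ)..εM, ((T x).length : ℝ)) ≤ ∫ x in (0:ℝ)..εM, ((S x).length : ℝ) := by
  have he : StrictMonoOn e (Icc 1 (r + 1)) :=
    strictMonoOn_Icc_of_lt_add_one fun k hk1 hkr => hemono k hk1 (by omega)
  have hdom : Ico 0 εM = Ico (e 1) (e (r + 1)) := by
    rw [first_error_value_eq_zero hn hεMpos he heset, hetop]
  have hmin : ∀ k ∈ Icc 1 r, ∃ y ∈ Ico (e k) (e (k + 1)),
      ∀ z ∈ Ico (e k) (e (k + 1)), (S y).length ≤ (S z).length := fun k hk =>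
    let f z := (S z).length
    ⟨Function.argminOn f (Ico (e k) (e (k + 1))) ⟨e k, le_rfl, hemono k hk.1 hk.2⟩,
      Function.argminOn_mem _ _ _, fun z hz => Function.argminOn_le f _ hz⟩
  choose! y hy hymin using hmin
  have hσ_err : ∀ x ∈ Ico 0 εM, ∀ a b : Fin n, a < b →
      err p a b ≤ (y ∘ stepIndex e r) x → err p a b ≤ x := by
    intro x hx a b hab herr
    rw [hdom] at hx
    have hlt : err p a b < εM := herr.trans_lt (hetop ▸ (mapsTo_comp_stepIndex he hy hx).2)
    obtain ⟨j, hj1, hjr, hj⟩ := heset.subset ⟨⟨a, b, hab, rfl⟩, hlt⟩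
    exact le_of_le_comp_stepIndex he hy hx ⟨j, ⟨hj1, hjr⟩, hj⟩ herr
  have hT := hS.comp (hdom ▸ monotoneOn_comp_stepIndex he hy)
    (hdom ▸ mapsTo_comp_stepIndex he hy) hσ_err
  refine ⟨_, hT, fun k hk1 hkr x hx hx' => ?_, ?_⟩
  · simp only [Function.comp_apply, stepIndex_eq he ⟨hk1, hkr⟩ ⟨hx, hx'⟩,
      stepIndex_eq he ⟨hk1, hkr⟩ ⟨le_rfl, hemono k hk1 hkr⟩]
  · refine intervalIntegral_mono_of_antitoneOn_Ico hεMpos.le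
      (Nat.mono_cast.comp_antitoneOn hT.length_antitoneOn)
      (Nat.mono_cast.comp_antitoneOn hS.length_antitoneOn) (fun _ _ => Nat.cast_nonneg _)
      fun x hx => ?_
    rw [hdom] at hx
    exact_mod_cast hymin _ (stepIndex_mem_Icc hx) x (mem_Ico_stepIndex hx)
end
end
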